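/- arXiv:1201.3039 — 7 statements merged into one kernel-verified Lean document; each statement's English description precedes it below -/
import Mathlib

section
/- If M is a nonzero injective module over a commutative noetherian local ring (R, m) of positive depth, then M = mM, and hence the m-adic completion of M is zero; in particular M is not m-adically complete. -/
/-!
Multiplication by a nonzerodivisor `x` is injective on `R`, so by injectivity of `M` every
`R`-linear map `R → M` extends along it; hence `x • M = M`. With `x ∈ m` this gives `M = mM`,
so `m ^ n • M = M` and every stage `M / m ^ n M` of the completion is zero, while a nonzero
module with `M = mM` cannot be `m`-adically separated.
-/

open IsLocalRing nonZeroDivisors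

section Injective

universe u v

variable {R : Type u} {M : Type v} [CommRing R] [Small.{v} R] [AddCommGroup M] [Module R M]
  [Module.Injective R M]

theorem Module.Injective.exists_smul_eq {x : R} (hx : x ∈ R⁰) (m : M) :
    ∃ y : M, x • y = m := by
  obtain ⟨h, hh⟩ := Module.Injective.extension_property R M R R (LinearMap.lsmul R R x)
    (isRegular_iff_mem_nonZeroDivisors.mpr hx).left (LinearMap.toSpanSingleton R M m)
  refine ⟨h 1, ?_⟩
  rw [← h.map_smul, smul_eq_mul, mul_one]
  simpa using LinearMap.congr_fun hh 1

theorem Module.Injective.smul_top_eq_top {I : Ideal R} (hI : ∃ x ∈ I, x ∈ R⁰) :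
    I • (⊤ : Submodule R M) = ⊤ := by
  obtain ⟨x, hxI, hx⟩ := hI
  refine eq_top_iff.mpr fun m _ ↦ ?_
  obtain ⟨y, rfl⟩ := exists_smul_eq hx m
  exact Submodule.smul_mem_smul hxI Submodule.mem_top

end Injective

section SmulTopEqTop

variable {R M : Type*} [CommRing R] [AddCommGroup M] [Module R M] {I : Ideal R}

theorem Submodule.pow_smul_top_eq_top (h : I • (⊤ : Submodule R M) = ⊤) (n : ℕ) :
    I ^ n • (⊤ : Submodule R M) = ⊤ := by
  induction n with
  | zero => simp
  | succ n ih => rw [pow_succ, mul_smul, h, ih]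

theorem AdicCompletion.subsingleton_of_smul_top_eq_top (h : I • (⊤ : Submodule R M) = ⊤) :
    Subsingleton (AdicCompletion I M) := by
  refine ⟨fun x y ↦ AdicCompletion.ext fun n ↦ ?_⟩
  have : Subsingleton (M ⧸ I ^ n • (⊤ : Submodule R M)) := by
    rw [Submodule.pow_smul_top_eq_top h n]
    infer_instance
  exact Subsingleton.elim _ _

theorem IsHausdorff.subsingleton_of_smul_top_eq_top (hH : IsHausdorff I M)
    (h : I • (⊤ : Submodule R M) = ⊤) : Subsingleton M :=
  ⟨fun x y ↦ hH.eq_iff_smodEq.mpr fun n ↦ by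
    rw [SModEq, Submodule.pow_smul_top_eq_top h n, Submodule.Quotient.eq]
    exact Submodule.mem_top⟩

end SmulTopEqTop

theorem stmt_0_general (R M : Type) [CommRing R] [IsLocalRing R]
    [AddCommGroup M] [Module R M] [Nontrivial M] (hM : Module.Injective R M)
    (hdepth : ∃ x ∈ maximalIdeal R, x ∈ nonZeroDivisors R) :
    (maximalIdeal R) • (⊤ : Submodule R M) = ⊤ ∧
      Subsingleton (AdicCompletion (maximalIdeal R) M) ∧
      ¬ IsAdicComplete (maximalIdeal R) M := by
  have htop : (maximalIdeal R) • (⊤ : Submodule R M) = ⊤ :=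
    Module.Injective.smul_top_eq_top hdepth
  refine ⟨htop, AdicCompletion.subsingleton_of_smul_top_eq_top htop, fun hcomplete ↦ ?_⟩
  exact not_subsingleton M (hcomplete.toIsHausdorff.subsingleton_of_smul_top_eq_top htop)

/-- If `M` is a nonzero injective module over a commutative noetherian local ring `(R, m)`
of positive depth (i.e. `m` contains a nonzerodivisor), then `M = mM`, hence the `m`-adic
completion of `M` is zero; in particular `M` is not `m`-adically complete. -/
theorem stmt_0 (R M : Type) [CommRing R] [IsNoetherianRing R] [IsLocalRing R]
    [AddCommGroup M] [Module R M] [Nontrivial M] (hM : Module.Injective R M)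
    (hdepth : ∃ x ∈ maximalIdeal R, x ∈ nonZeroDivisors R) :
    (maximalIdeal R) • (⊤ : Submodule R M) = ⊤ ∧
      Subsingleton (AdicCompletion (maximalIdeal R) M) ∧
      ¬ IsAdicComplete (maximalIdeal R) M :=
  stmt_0_general R M hM hdepth
end

section
/- Let φ : R → S be a faithfully flat homomorphism of commutative rings. Then the quotient R-module S/φ(R) is flat over R. -/
/-!
Since `S` is flat, the long exact `Tor` sequence of `0 → R → S → S/R → 0` identifies
`Tor₁(S/R, Q)` with the kernel of `R ⊗ Q → S ⊗ Q`, and this map is injective for every `Q`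
because a faithfully flat map is pure. Without `Tor`, the same argument is a diagram chase against
an injection `Q → Q'` that uses purity for the module `Q'/Q`.
-/

open TensorProduct

theorem LinearMap.lTensor_rTensor_comm {R M N P Q : Type*} [CommRing R] [AddCommGroup M]
    [AddCommGroup N] [AddCommGroup P] [AddCommGroup Q] [Module R M] [Module R N] [Module R P]
    [Module R Q] (f : M →ₗ[R] N) (g : P →ₗ[R] Q) (x : M ⊗[R] P) :
    g.lTensor N (f.rTensor P x) = f.rTensor Q (g.lTensor M x) := by
  rw [← comp_apply, lTensor_comp_rTensor, ← rTensor_comp_lTensor, comp_apply]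

universe u w

theorem Module.Flat.of_exact_of_rTensor_injective {R : Type u} {N M : Type*} {P : Type w}
    [CommRing R] [AddCommGroup N] [AddCommGroup M] [AddCommGroup P] [Module R N] [Module R M]
    [Module R P] [Module.Flat R M] {f : N →ₗ[R] M} {g : M →ₗ[R] P}
    (hfg : Function.Exact f g) (hg : Function.Surjective g)
    (hf : ∀ (Q : Type (max u w)) [AddCommGroup Q] [Module R Q], Function.Injective (f.rTensor Q)) :
    Module.Flat R P := by
  rw [iff_lTensor_preserves_injective_linearMap]
  intro Q Q' _ _ _ _ i hi
  rw [injective_iff_map_eq_zero]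
  intro x hx
  obtain ⟨y, rfl⟩ := LinearMap.rTensor_surjective Q hg x
  rw [LinearMap.lTensor_rTensor_comm] at hx
  obtain ⟨z, hz⟩ := (_root_.rTensor_exact Q' hfg hg _).mp hx
  set p := (LinearMap.range i).mkQ
  have hpz : p.lTensor N z = 0 := by
    apply hf _
    rw [map_zero, ← LinearMap.lTensor_rTensor_comm, hz, ← LinearMap.comp_apply,
      ← LinearMap.lTensor_comp, LinearMap.range_mkQ_comp, LinearMap.lTensor_zero,
      LinearMap.zero_apply]
  obtain ⟨w, rfl⟩ :=
    (_root_.lTensor_exact N (LinearMap.exact_map_mkQ_range i) (Submodule.mkQ_surjective _) z).mp hpz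
  have hyw : y = f.rTensor Q w := by
    apply lTensor_preserves_injective_linearMap i hi
    rw [← hz, LinearMap.lTensor_rTensor_comm]
  rw [hyw, ← LinearMap.comp_apply, ← LinearMap.rTensor_comp, hfg.linearMap_comp_eq_zero,
    LinearMap.rTensor_zero, LinearMap.zero_apply]

theorem Module.FaithfullyFlat.rTensor_algebraLinearMap_injective {R S : Type*} [CommRing R]
    [CommRing S] [Algebra R S] [Module.FaithfullyFlat R S] (Q : Type*) [AddCommGroup Q]
    [Module R Q] :
    Function.Injective ((Algebra.linearMap R S).rTensor Q) := by
  have h : (Algebra.linearMap R S).rTensor Q =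
      TensorProduct.mk R S Q 1 ∘ₗ (TensorProduct.lid R Q).toLinearMap := by
    ext q
    simp
  rw [h]
  exact (tensorProduct_mk_injective Q).comp (TensorProduct.lid R Q).injective

/-- If `φ : R → S` is a faithfully flat homomorphism of commutative rings, then the quotient
`R`-module `S / φ(R)` is flat over `R`. -/
theorem stmt_7 (R S : Type) [CommRing R] [CommRing S] [Algebra R S]
    [Module.FaithfullyFlat R S] :
    Module.Flat R (S ⧸ LinearMap.range (Algebra.linearMap R S)) :=
  Module.Flat.of_exact_of_rTensor_injective (LinearMap.exact_map_mkQ_range _)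
    (Submodule.mkQ_surjective _)
    fun Q _ _ ↦ Module.FaithfullyFlat.rTensor_algebraLinearMap_injective Q
end

section
/- Let φ : (R, m) → (S, mS) be a faithfully flat local homomorphism of commutative noetherian local rings such that the induced map R/m → S/mS is an isomorphism. Then the induced map between m-adic completions φ̂ : R̂ → Ŝ is an isomorphism. -/
/-!
It suffices that `R ⧸ m ^ n → S ⧸ m ^ n S` is bijective for every `n`. Injectivity is faithful
flatness (`m ^ n S ∩ R = m ^ n`). For surjectivity, residue field surjectivity and `mS = 𝔪_S` give
`S = R + mS`; multiplying by `m ^ n` and substituting repeatedly yields `S = R + m ^ n S`.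
-/

open IsLocalRing

theorem Submodule.sup_pow_smul_top_eq_top {R M : Type*} [CommSemiring R] [AddCommMonoid M]
    [Module R M] {I : Ideal R} {N : Submodule R M} (h : N ⊔ I • ⊤ = ⊤) (n : ℕ) :
    N ⊔ I ^ n • ⊤ = ⊤ := by
  induction n with
  | zero => simp
  | succ n ih =>
    refine eq_top_iff.2 ?_
    calc ⊤ = N ⊔ I ^ n • (N ⊔ I • ⊤) := by rw [h, ih]
      _ = N ⊔ I ^ n • N ⊔ I ^ (n + 1) • ⊤ := by
        rw [Submodule.smul_sup, pow_succ, Submodule.mul_smul, sup_assoc]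
      _ ≤ N ⊔ I ^ (n + 1) • ⊤ := by
        rw [sup_eq_left.2 (Submodule.smul_le_right : I ^ n • N ≤ N)]

namespace LinearMap

variable {R M N : Type*} [CommRing R] [AddCommGroup M] [Module R M] [AddCommGroup N] [Module R N]

theorem reduceModIdeal_surjective_of_range_sup_eq_top {f : M →ₗ[R] N} {I : Ideal R}
    (h : range f ⊔ I • ⊤ = ⊤) : Function.Surjective (f.reduceModIdeal I) := by
  rintro ⟨y⟩
  obtain ⟨_, ⟨x, rfl⟩, z, hz, hy⟩ := Submodule.mem_sup.1 (h ▸ Submodule.mem_top : y ∈ _)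
  refine ⟨Submodule.Quotient.mk x, ?_⟩
  rw [reduceModIdeal_apply, ← hy]
  exact (Submodule.Quotient.eq _).2 (by simpa using neg_mem hz)

theorem reduceModIdeal_injective_of_comap_le {f : M →ₗ[R] N} {I : Ideal R}
    (h : (I • ⊤ : Submodule R N).comap f ≤ I • ⊤) : Function.Injective (f.reduceModIdeal I) := by
  rintro ⟨x⟩ ⟨y⟩ hxy
  rw [Submodule.Quotient.quot_mk_eq_mk, Submodule.Quotient.quot_mk_eq_mk, reduceModIdeal_apply,
    reduceModIdeal_apply, Submodule.Quotient.eq, ← map_sub] at hxy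
  exact (Submodule.Quotient.eq _).2 (h hxy)

end LinearMap

namespace AdicCompletion

open LinearMap

variable {R M N : Type*} [CommRing R] (I : Ideal R) [AddCommGroup M] [Module R M]
  [AddCommGroup N] [Module R N] {f : M →ₗ[R] N}

theorem map_injective_of_reduceModIdeal_injective
    (hf : ∀ n, Function.Injective (f.reduceModIdeal (I ^ n))) : Function.Injective (map I f) :=
  fun x y hxy ↦ ext fun n ↦ hf n (by simpa using congrArg (fun z ↦ z.val n) hxy)

theorem map_surjective_of_reduceModIdeal_bijective
    (hf : ∀ n, Function.Bijective (f.reduceModIdeal (I ^ n))) : Function.Surjective (map I f) := by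
  intro y
  choose x hx using fun n ↦ (hf n).2 (y.val n)
  refine ⟨⟨x, fun {m n} hmn ↦ (hf m).1 ?_⟩, ext fun n ↦ hx n⟩
  have := LinearMap.congr_fun (transitionMap_comp_reduceModIdeal I f hmn) (x n)
  simp only [coe_comp, Function.comp_apply, LinearMap.coe_restrictScalars] at this
  rw [← this, hx, hx]
  exact y.property hmn

theorem map_bijective_of_reduceModIdeal_bijective
    (hf : ∀ n, Function.Bijective (f.reduceModIdeal (I ^ n))) : Function.Bijective (map I f) :=
  ⟨map_injective_of_reduceModIdeal_injective I fun n ↦ (hf n).1,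
    map_surjective_of_reduceModIdeal_bijective I hf⟩

end AdicCompletion

theorem Algebra.linearMap_reduceModIdeal_injective {R S : Type*} [CommRing R] [CommRing S]
    [Algebra R S] [Module.FaithfullyFlat R S] (I : Ideal R) :
    Function.Injective ((Algebra.linearMap R S).reduceModIdeal I) := by
  refine LinearMap.reduceModIdeal_injective_of_comap_le fun x hx ↦ ?_
  rw [Ideal.smul_top_eq_map] at hx
  simpa using (Ideal.comap_map_eq_self_of_faithfullyFlat (B := S) I).le hx

theorem IsLocalRing.range_algebraLinearMap_sup_maximalIdeal_smul_top_eq_top {R S : Type*}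
    [CommRing R] [CommRing S] [Algebra R S] [IsLocalRing R] [IsLocalRing S]
    [IsLocalHom (algebraMap R S)]
    (hmax : (maximalIdeal R).map (algebraMap R S) = maximalIdeal S)
    (hres : Function.Surjective (ResidueField.map (algebraMap R S))) :
    LinearMap.range (Algebra.linearMap R S) ⊔ maximalIdeal R • ⊤ = ⊤ := by
  refine eq_top_iff.2 fun s _ ↦ ?_
  obtain ⟨x, hx⟩ := hres (residue S s)
  obtain ⟨r, rfl⟩ := residue_surjective x
  rw [ResidueField.map_residue, ← sub_eq_zero, ← map_sub, residue_eq_zero_iff] at hx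
  rw [Ideal.smul_top_eq_map, hmax]
  exact Submodule.mem_sup.2 ⟨_, ⟨r, rfl⟩, s - algebraMap R S r, by simpa using neg_mem hx,
    add_sub_cancel _ _⟩

theorem stmt_8_general (R S : Type) [CommRing R] [CommRing S]
    [IsLocalRing R] [IsLocalRing S] [Algebra R S] [Module.FaithfullyFlat R S]
    [IsLocalHom (algebraMap R S)]
    (hmax : (maximalIdeal R).map (algebraMap R S) = maximalIdeal S)
    (hres : Function.Bijective (ResidueField.map (algebraMap R S))) :
    Function.Bijective
      (AdicCompletion.map (maximalIdeal R) (Algebra.linearMap R S)) := by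
  have hsup := range_algebraLinearMap_sup_maximalIdeal_smul_top_eq_top hmax hres.2
  refine AdicCompletion.map_bijective_of_reduceModIdeal_bijective _ fun n ↦ ⟨?_, ?_⟩
  · exact Algebra.linearMap_reduceModIdeal_injective _
  · exact LinearMap.reduceModIdeal_surjective_of_range_sup_eq_top
      (Submodule.sup_pow_smul_top_eq_top hsup n)

/-- Let `φ : (R, m) → (S, mS)` be a faithfully flat local homomorphism of commutative noetherian
local rings such that the induced map `R/m → S/mS` is an isomorphism.  Then the induced map
between `m`-adic completions `φ̂ : R̂ → Ŝ` is an isomorphism.  (Since `mS` is the maximal ideal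
of `S`, the `m`-adic and `mS`-adic completions of `S` agree; the induced map is
`AdicCompletion.map` applied to `φ` viewed as an `R`-linear map.) -/
theorem stmt_8 (R S : Type) [CommRing R] [CommRing S] [IsNoetherianRing R] [IsNoetherianRing S]
    [IsLocalRing R] [IsLocalRing S] [Algebra R S] [Module.FaithfullyFlat R S]
    [IsLocalHom (algebraMap R S)]
    (hmax : (maximalIdeal R).map (algebraMap R S) = maximalIdeal S)
    (hres : Function.Bijective (ResidueField.map (algebraMap R S))) :
    Function.Bijective
      (AdicCompletion.map (maximalIdeal R) (Algebra.linearMap R S)) :=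
  stmt_8_general R S hmax hres
end

section
/- Let φ : (R, m) → (S, mS) be a flat local homomorphism of commutative noetherian local rings inducing an isomorphism on residue fields, and let C be an m-adically complete R-module. Then the evaluation map Hom_R(S, C) → C, f ↦ f(1), is an isomorphism, and C admits an S-module structure compatible with its R-module structure via φ. -/
/-!
A flat local homomorphism is faithfully flat, so `m ^ n S ∩ R = m ^ n`; and since `mS` is the
maximal ideal of `S` and the residue fields agree, `R` is `m`-adically dense in `S`. Hence
`R ⧸ m ^ n ≃ S ⧸ m ^ n S` for every `n`, and inverting these isomorphisms gives an `R`-algebra map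
`S → R̂` into the `m`-adic completion. The complete module `C ≅ Ĉ` is an `R̂`-module, hence an
`S`-module, and `c ↦ (s ↦ s • c)` is a section of evaluation at `1`. Evaluation is injective
because a linear map `S → C` is determined modulo `m ^ n C` by its values on the dense `R`.
-/

open IsLocalRing

/-- `M` admits an `S`-module structure whose restriction of scalars along the algebra map
`R → S` recovers the given `R`-module structure. -/
def HasCompatibleModuleStructure (R S M : Type) [CommRing R] [CommRing S] [Algebra R S]
    [AddCommGroup M] [Module R M] : Prop :=
  ∃ hmod : Module S M, ∀ (r : R) (m : M),
    @SMul.smul S M hmod.toDistribMulAction.toMulAction.toSMul (algebraMap R S r) m = r • m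

theorem IsLocalRing.exists_sub_algebraMap_mem_pow_smul_top {R S : Type*} [CommRing R]
    [CommRing S] [IsLocalRing R] [IsLocalRing S] [Algebra R S] [IsLocalHom (algebraMap R S)]
    (hmax : (maximalIdeal R).map (algebraMap R S) = maximalIdeal S)
    (hres : Function.Surjective (ResidueField.map (algebraMap R S))) (n : ℕ) (s : S) :
    ∃ r : R, s - algebraMap R S r ∈ (maximalIdeal R ^ n • ⊤ : Submodule R S) := by
  have hone : LinearMap.range (Algebra.linearMap R S) ⊔ maximalIdeal R • ⊤ = ⊤ := by
    refine eq_top_iff.2 fun s _ => ?_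
    obtain ⟨x, hx⟩ := hres (residue S s)
    obtain ⟨r, rfl⟩ := Ideal.Quotient.mk_surjective x
    have hr : s - algebraMap R S r ∈ maximalIdeal S := by
      rw [← Ideal.Quotient.eq]
      exact hx.symm
    rw [← add_sub_cancel (algebraMap R S r) s]
    refine Submodule.add_mem_sup ⟨r, rfl⟩ ?_
    rwa [Ideal.smul_top_eq_map, hmax]
  obtain ⟨_, ⟨r, rfl⟩, x, hx, hrx⟩ :=
    Submodule.mem_sup.1 (Submodule.sup_pow_smul_top_eq_top hone n ▸ Submodule.mem_top (x := s))
  exact ⟨r, by rwa [← hrx, Algebra.linearMap_apply, add_sub_cancel_left]⟩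

theorem LinearMap.ext_of_apply_one {R S M : Type*} [CommRing R] [CommRing S] [Algebra R S]
    [AddCommGroup M] [Module R M] {I : Ideal R} [IsHausdorff I M]
    (hdense : ∀ (n : ℕ) (s : S), ∃ r : R, s - algebraMap R S r ∈ (I ^ n • ⊤ : Submodule R S))
    {f g : S →ₗ[R] M} (h : f 1 = g 1) : f = g := by
  ext s
  refine (IsHausdorff.eq_iff_smodEq (I := I)).2 fun n => ?_
  obtain ⟨r, hr⟩ := hdense n s
  have hs : s = r • 1 + (s - algebraMap R S r) := by rw [Algebra.smul_def, mul_one, add_sub_cancel]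
  rw [hs, map_add, map_add, map_smul, map_smul, h]
  exact SModEq.rfl.add (SModEq.sub_mem.2 (sub_mem
    (Submodule.smul_top_le_comap_smul_top _ f hr) (Submodule.smul_top_le_comap_smul_top _ g hr)))

theorem AlgHom.ext_quotient_of_dense {R S : Type*} [CommRing R] [CommRing S] [Algebra R S]
    {J : Ideal R} (hdense : ∀ s : S, ∃ r : R, s - algebraMap R S r ∈ (J • ⊤ : Submodule R S))
    (f g : S →ₐ[R] R ⧸ J) : f = g := by
  have hzero : (J • ⊤ : Submodule R (R ⧸ J)) = ⊥ := by
    rw [Ideal.smul_top_eq_map, Ideal.Quotient.algebraMap_eq, Ideal.map_quotient_self,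
      Submodule.restrictScalars_bot]
  ext s
  obtain ⟨r, hr⟩ := hdense s
  have hs : s = algebraMap R S r + (s - algebraMap R S r) := by rw [add_sub_cancel]
  have hvanish : ∀ φ : S →ₐ[R] R ⧸ J, φ (s - algebraMap R S r) = 0 := fun φ => by
    simpa [hzero] using Submodule.smul_top_le_comap_smul_top _ φ.toLinearMap hr
  rw [hs, map_add, map_add, hvanish f, hvanish g, f.commutes, g.commutes]

noncomputable def Ideal.quotientAlgEquivOfDense {R S : Type*} [CommRing R] [CommRing S]
    [Algebra R S] [Module.FaithfullyFlat R S] {J : Ideal R}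
    (hdense : ∀ s : S, ∃ r : R, s - algebraMap R S r ∈ (J • ⊤ : Submodule R S)) :
    (R ⧸ J) ≃ₐ[R] S ⧸ J.map (algebraMap R S) :=
  AlgEquiv.ofBijective (Ideal.quotientMapₐ _ (Algebra.ofId R S) Ideal.le_comap_map)
    ⟨Ideal.quotientMap_injective' (H := Ideal.le_comap_map)
      (Ideal.comap_map_eq_self_of_faithfullyFlat J).le, fun x => by
      obtain ⟨s, rfl⟩ := Ideal.Quotient.mk_surjective x
      obtain ⟨r, hr⟩ := hdense s
      refine ⟨Ideal.Quotient.mk J r, (Ideal.Quotient.eq.2 ?_)⟩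
      rw [Ideal.smul_top_eq_map] at hr
      simpa using J.map (algebraMap R S) |>.neg_mem hr⟩

noncomputable def AdicCompletion.liftOfDense {R S : Type*} [CommRing R] [CommRing S]
    [Algebra R S] [Module.FaithfullyFlat R S] {I : Ideal R}
    (hdense : ∀ (n : ℕ) (s : S), ∃ r : R, s - algebraMap R S r ∈ (I ^ n • ⊤ : Submodule R S)) :
    S →ₐ[R] AdicCompletion I R :=
  AdicCompletion.liftAlgHom I
    (fun n => (Ideal.quotientAlgEquivOfDense (hdense n)).symm.toAlgHom.comp
      (Ideal.Quotient.mkₐ R _))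
    (fun _ => AlgHom.ext_quotient_of_dense (hdense _) _ _)

theorem HasCompatibleModuleStructure.of_algHom {R S A M : Type} [CommRing R] [CommRing S]
    [Semiring A] [Algebra R S] [Algebra R A] [AddCommGroup M] [Module R M] [Module A M]
    [IsScalarTower R A M] (ψ : S →ₐ[R] A) : HasCompatibleModuleStructure R S M := by
  let _ : Module S M := Module.compHom M (ψ : S →+* A)
  refine ⟨‹_›, fun r m => ?_⟩
  show ψ (algebraMap R S r) • m = r • m
  rw [AlgHom.commutes, algebraMap_smul]

theorem HasCompatibleModuleStructure.of_linearEquiv {R S M N : Type} [CommRing R] [CommRing S]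
    [Algebra R S] [AddCommGroup M] [Module R M] [AddCommGroup N] [Module R N] (e : M ≃ₗ[R] N)
    (h : HasCompatibleModuleStructure R S N) : HasCompatibleModuleStructure R S M := by
  obtain ⟨_, hcompat⟩ := h
  let _ : SMul S M := ⟨fun s m => e.symm (s • e m)⟩
  refine ⟨e.injective.module S e.toAddMonoidHom fun s m => e.apply_symm_apply _, fun r m => ?_⟩
  show e.symm (algebraMap R S r • e m) = r • m
  rw [show algebraMap R S r • e m = r • e m from hcompat r _, map_smul,
    LinearEquiv.symm_apply_apply]

theorem HasCompatibleModuleStructure.surjective_eval_one {R S M : Type} [CommRing R]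
    [CommRing S] [Algebra R S] [AddCommGroup M] [Module R M]
    (h : HasCompatibleModuleStructure R S M) : Function.Surjective fun f : S →ₗ[R] M => f 1 := by
  obtain ⟨_, hcompat⟩ := h
  intro m
  refine ⟨{ toFun s := s • m
            map_add' s t := add_smul s t m
            map_smul' r s := ?_ }, one_smul S m⟩
  rw [Algebra.smul_def, mul_smul]
  exact hcompat r _

theorem stmt_11_general (R S C : Type) [CommRing R] [CommRing S]
    [IsLocalRing R] [IsLocalRing S] [Algebra R S] [Module.Flat R S]
    [IsLocalHom (algebraMap R S)]
    (hmax : (maximalIdeal R).map (algebraMap R S) = maximalIdeal S)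
    (hres : Function.Bijective (ResidueField.map (algebraMap R S)))
    [AddCommGroup C] [Module R C] [IsAdicComplete (maximalIdeal R) C] :
    Function.Bijective (fun f : S →ₗ[R] C => f 1) ∧
      HasCompatibleModuleStructure R S C := by
  have : Module.FaithfullyFlat R S := .of_flat_of_isLocalHom
  have hdense := exists_sub_algebraMap_mem_pow_smul_top hmax hres.2
  have hC : HasCompatibleModuleStructure R S C :=
    (HasCompatibleModuleStructure.of_algHom (AdicCompletion.liftOfDense hdense)).of_linearEquiv
      (AdicCompletion.ofLinearEquiv (maximalIdeal R) C)
  exact ⟨⟨fun _ _ h => LinearMap.ext_of_apply_one hdense h, hC.surjective_eval_one⟩, hC⟩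

/-- Let `φ : (R, m) → (S, mS)` be a flat local homomorphism of commutative noetherian local
rings inducing an isomorphism on residue fields, and let `C` be an `m`-adically complete
`R`-module.  Then the evaluation map `Hom_R(S, C) → C`, `f ↦ f(1)`, is an isomorphism, and `C`
admits an `S`-module structure compatible with its `R`-module structure via `φ`. -/
theorem stmt_11 (R S C : Type) [CommRing R] [CommRing S] [IsNoetherianRing R] [IsNoetherianRing S]
    [IsLocalRing R] [IsLocalRing S] [Algebra R S] [Module.Flat R S]
    [IsLocalHom (algebraMap R S)]
    (hmax : (maximalIdeal R).map (algebraMap R S) = maximalIdeal S)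
    (hres : Function.Bijective (ResidueField.map (algebraMap R S)))
    [AddCommGroup C] [Module R C] [IsAdicComplete (maximalIdeal R) C] :
    Function.Bijective (fun f : S →ₗ[R] C => f 1) ∧
      HasCompatibleModuleStructure R S C :=
  stmt_11_general R S C hmax hres
end

section
/- Let R be a discrete valuation ring that is not complete, with completion R̂. Then Hom_R(R̂, R) = 0. -/
/-!
Every `R`-linear map `f : R̂ → R` is continuous for the adic topologies and `R` is dense in `R̂`,
so `f` is determined by `c = f 1`: composed with `R → R̂` it becomes multiplication by `c` on
`R̂`. If `c = 0` this forces `f = 0`. Otherwise `cR = mᵏ`, and since `R̂` is torsion-free, any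
`x ∈ R̂` with `c x ∈ R` already lies in `R`; so `R → R̂` would be surjective and `R` complete.
-/

open IsLocalRing

namespace AdicCompletion

variable {R : Type*} [CommRing R] {I : Ideal R} {M N : Type*} [AddCommGroup M] [Module R M]
  [AddCommGroup N] [Module R N]

theorem mk_sub_of_mem_pow_smul_top (hI : I.FG) (a : AdicCauchySequence I M) (n : ℕ) :
    mk I M a - of I M (a n) ∈ (I ^ n • ⊤ : Submodule R (AdicCompletion I M)) := by
  rw [pow_smul_top_eq_ker_eval hI, LinearMap.mem_ker, map_sub, sub_eq_zero, eval_of]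
  rfl

theorem linearMap_ext_of [IsHausdorff I N] (hI : I.FG) {f g : AdicCompletion I M →ₗ[R] N}
    (h : f ∘ₗ of I M = g ∘ₗ of I M) : f = g := by
  refine sub_eq_zero.mp (LinearMap.ext fun x => ?_)
  obtain ⟨a, rfl⟩ := mk_surjective I M x
  refine IsHausdorff.haus ‹_› _ fun n => SModEq.zero.mpr ?_
  have hfg : (f - g) (of I M (a n)) = 0 := by
    rw [LinearMap.sub_apply, ← LinearMap.comp_apply, h, LinearMap.comp_apply, sub_self]
  have := Submodule.smul_top_le_comap_smul_top (I ^ n) (f - g) (mk_sub_of_mem_pow_smul_top hI a n)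
  rwa [Submodule.mem_comap, map_sub, hfg, sub_zero] at this

theorem mem_pow_smul_top_of_of_mem {m : M} {n : ℕ}
    (h : of I M m ∈ (I ^ n • ⊤ : Submodule R (AdicCompletion I M))) :
    m ∈ (I ^ n • ⊤ : Submodule R M) := by
  have := pow_smul_top_le_ker_eval I n h
  rwa [LinearMap.mem_ker, eval_of, Submodule.mkQ_apply, Submodule.Quotient.mk_eq_zero] at this

theorem of_comp_eq_smul_id (hI : I.FG) (f : AdicCompletion I R →ₗ[R] R) :
    of I R ∘ₗ f = f (of I R 1) • LinearMap.id := by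
  refine linearMap_ext_of hI (LinearMap.ext_ring ?_)
  simp only [LinearMap.comp_apply, LinearMap.smul_apply, LinearMap.id_apply]
  rw [← map_smul, smul_eq_mul, mul_one]

theorem mem_range_of_of_smul_mem_range [IsNoetherianRing R] [IsDomain R] {c : R} (hc : c ≠ 0)
    {k : ℕ} (hck : Ideal.span {c} = I ^ k) {x : AdicCompletion I R}
    (hx : c • x ∈ LinearMap.range (of I R)) : x ∈ LinearMap.range (of I R) := by
  obtain ⟨s, hs⟩ := hx
  have hsc : s ∈ Ideal.span {c} := by
    rw [hck, ← Ideal.mul_top (I ^ k), ← smul_eq_mul]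
    refine mem_pow_smul_top_of_of_mem (hs ▸ Submodule.smul_mem_smul ?_ trivial)
    exact hck ▸ Ideal.mem_span_singleton_self c
  obtain ⟨t, rfl⟩ := Ideal.mem_span_singleton'.mp hsc
  -- `R̂` is flat, hence torsion-free, over the Noetherian domain `R`.
  refine ⟨t, smul_right_injective _ hc ?_⟩
  simp only [← hs, ← map_smul, smul_eq_mul, mul_comm]

end AdicCompletion

open AdicCompletion

/-- If `R` is a discrete valuation ring that is not complete, with completion `R̂`, then
`Hom_R(R̂, R) = 0`. -/
theorem stmt_13 (R : Type) [CommRing R] [IsDomain R] [IsDiscreteValuationRing R]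
    (hnc : ¬ IsAdicComplete (maximalIdeal R) R) :
    Subsingleton (AdicCompletion (maximalIdeal R) R →ₗ[R] R) := by
  refine subsingleton_of_forall_eq 0 fun f => ?_
  have hf := of_comp_eq_smul_id (IsNoetherian.noetherian _) f
  by_cases hc : f (of _ R 1) = 0
  · refine LinearMap.ext fun x => of_injective (maximalIdeal R) R ?_
    simpa [hc] using LinearMap.congr_fun hf x
  · obtain ⟨k, hk⟩ := exists_maximalIdeal_pow_eq_of_principal R
      (IsPrincipalIdealRing.principal _) _ (Ideal.span_singleton_eq_bot.not.mpr hc)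
    refine absurd (of_bijective_iff.mp ⟨of_injective _ R, fun x => ?_⟩) hnc
    exact mem_range_of_of_smul_mem_range hc hk ⟨f x, LinearMap.congr_fun hf x⟩
end

section
/- Let R be a discrete valuation ring that is not complete, with completion R̂, fraction field K, and K̃ = Q(R̂). Then there is an R-module isomorphism R̂/R ≅ K̃/K. -/
/-!
The composite `R̂ → K̃ → K̃/K` has kernel `R̂ ∩ K = R` and is surjective. Both facts come from
the structure of `R̂`: with `ϖ` a uniformizer of `R`, the ideal `ϖⁿR̂` is the kernel of
`R̂ → R/ϖⁿ`, so `R̂ = R + ϖⁿR̂` and `ϖⁿR̂ ∩ R = ϖⁿR`; and since `R̂` is local, Hausdorff, with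
maximal ideal `ϖR̂`, every nonzero element of `R̂` is a unit times a power of `ϖ`. Hence every
element of `K̃` is `c + r/ϖⁿ` with `c ∈ R̂`, `r ∈ R`, and a divisibility `t ∣ r` in `R̂` between
elements of `R` already holds in `R`.
-/

open IsLocalRing

namespace AdicCompletion

variable {R M : Type*} [CommRing R] [AddCommGroup M] [Module R M] {I : Ideal R}

theorem of_mem_pow_smul_top_iff (hI : I.FG) {n : ℕ} {x : M} :
    of I M x ∈ (I ^ n • ⊤ : Submodule R (AdicCompletion I M)) ↔
      x ∈ (I ^ n • ⊤ : Submodule R M) := by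
  rw [pow_smul_top_eq_ker_eval hI, LinearMap.mem_ker, eval_of, Submodule.mkQ_apply,
    Submodule.Quotient.mk_eq_zero]

theorem exists_sub_of_mem_pow_smul_top (hI : I.FG) (x : AdicCompletion I M) (n : ℕ) :
    ∃ m : M, x - of I M m ∈ (I ^ n • ⊤ : Submodule R (AdicCompletion I M)) := by
  obtain ⟨m, hm⟩ := Submodule.Quotient.mk_surjective _ (eval I M n x)
  refine ⟨m, ?_⟩
  rw [pow_smul_top_eq_ker_eval hI, LinearMap.mem_ker, map_sub, eval_of, Submodule.mkQ_apply, hm,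
    sub_self]

end AdicCompletion

theorem IsLocalRing.exists_eq_unit_mul_pow {A : Type*} [CommRing A] [IsLocalRing A] {p : A}
    (hp : maximalIdeal A = Ideal.span {p}) [IsHausdorff (maximalIdeal A) A] {x : A}
    (hx : x ≠ 0) : ∃ (u : Aˣ) (n : ℕ), x = u * p ^ n := by
  have hpow : ∀ n, (maximalIdeal A ^ n • ⊤ : Submodule A A) = Ideal.span {p ^ n} := fun n => by
    rw [smul_eq_mul, Ideal.mul_top, hp, Ideal.span_singleton_pow]
  have hbound : ∃ n, ¬ p ^ n ∣ x := by
    by_contra! h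
    refine hx (IsHausdorff.haus ‹_› x fun n => ?_)
    rw [SModEq.zero, hpow, Ideal.mem_span_singleton]
    exact h n
  classical
  obtain ⟨n, hn⟩ : ∃ n, Nat.find hbound = n + 1 :=
    Nat.exists_eq_add_one.mpr (Nat.pos_of_ne_zero fun h0 => by
      simpa [h0] using Nat.find_spec hbound)
  obtain ⟨u, rfl⟩ : p ^ n ∣ x := not_not.mp (Nat.find_min hbound (by omega))
  have hu : IsUnit u := by
    by_contra hu
    rw [← mem_nonunits_iff, ← mem_maximalIdeal, hp, Ideal.mem_span_singleton] at hu
    exact Nat.find_spec hbound (hn ▸ pow_succ p n ▸ mul_dvd_mul_left _ hu)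
  exact ⟨hu.unit, n, mul_comm _ _⟩

namespace AdicCompletion

variable {R : Type*} [CommRing R] [IsDomain R] [IsDiscreteValuationRing R]

local notation "R̂" => AdicCompletion (maximalIdeal R) R

theorem mem_pow_smul_top_iff_dvd {ϖ : R} (hϖ : Irreducible ϖ) {n : ℕ} {x : R̂} :
    x ∈ (maximalIdeal R ^ n • ⊤ : Submodule R R̂) ↔ algebraMap R R̂ ϖ ^ n ∣ x := by
  have hpow : maximalIdeal R ^ n = Ideal.span {ϖ ^ n} := by
    rw [hϖ.maximalIdeal_eq, Ideal.span_singleton_pow]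
  rw [Ideal.smul_top_eq_map, Submodule.restrictScalars_mem, hpow, Ideal.map_span,
    Set.image_singleton, Ideal.mem_span_singleton, _root_.map_pow]

theorem algebraMap_injective_of_isDiscreteValuationRing : Function.Injective (algebraMap R R̂) :=
  fun a b h => of_injective _ R (by
    simpa only [algebraMap_apply, Algebra.algebraMap_self, RingHom.id_apply] using h)

theorem algebraMap_dvd_algebraMap_iff {t r : R} :
    algebraMap R R̂ t ∣ algebraMap R R̂ r ↔ t ∣ r := by
  refine ⟨fun h => ?_, _root_.map_dvd _⟩
  rcases eq_or_ne t 0 with rfl | ht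
  · rw [_root_.map_zero, zero_dvd_iff,
      map_eq_zero_iff _ algebraMap_injective_of_isDiscreteValuationRing] at h
    rw [h]
  obtain ⟨ϖ, hϖ⟩ := IsDiscreteValuationRing.exists_irreducible R
  obtain ⟨n, u, rfl⟩ := IsDiscreteValuationRing.eq_unit_mul_pow_irreducible ht hϖ
  rw [_root_.map_mul, (u.isUnit.map _).mul_left_dvd, _root_.map_pow,
    ← mem_pow_smul_top_iff_dvd hϖ, algebraMap_apply, Algebra.algebraMap_self, RingHom.id_apply,
    of_mem_pow_smul_top_iff (maximalIdeal R).fg_of_isNoetherianRing, smul_eq_mul,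
    Ideal.mul_top, hϖ.maximalIdeal_eq, Ideal.span_singleton_pow, Ideal.mem_span_singleton] at h
  exact u.isUnit.mul_left_dvd.mpr h

theorem exists_eq_algebraMap_add_pow_mul {ϖ : R} (hϖ : Irreducible ϖ) (x : R̂) (n : ℕ) :
    ∃ (r : R) (c : R̂), x = algebraMap R R̂ r + algebraMap R R̂ ϖ ^ n * c := by
  obtain ⟨r, hr⟩ := exists_sub_of_mem_pow_smul_top (maximalIdeal R).fg_of_isNoetherianRing x n
  obtain ⟨c, hc⟩ := (mem_pow_smul_top_iff_dvd hϖ).mp hr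
  refine ⟨r, c, ?_⟩
  rw [algebraMap_apply, Algebra.algebraMap_self, RingHom.id_apply, ← hc]
  abel

theorem maximalIdeal_eq_span_of_irreducible {ϖ : R} (hϖ : Irreducible ϖ) :
    maximalIdeal R̂ = Ideal.span {algebraMap R R̂ ϖ} := by
  rw [maximalIdeal_eq_map, hϖ.maximalIdeal_eq, Ideal.map_span, Set.image_singleton]

local notation "K" => FractionRing R
local notation "K̃" => FractionRing (AdicCompletion (maximalIdeal R) R)

theorem algebraMap_algebraMap_ne_zero {r : R} (hr : r ≠ 0) :
    algebraMap R̂ K̃ (algebraMap R R̂ r) ≠ 0 :=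
  (map_ne_zero_iff _ (IsFractionRing.injective R̂ K̃)).mpr
    ((map_ne_zero_iff _ algebraMap_injective_of_isDiscreteValuationRing).mpr hr)

variable [IsDomain (AdicCompletion (maximalIdeal R) R)]

attribute [local instance] FractionRing.liftAlgebra

theorem algebraMap_fractionRing_algebraMap (r : R) :
    algebraMap K K̃ (algebraMap R K r) = algebraMap R̂ K̃ (algebraMap R R̂ r) := by
  rw [← IsScalarTower.algebraMap_apply, ← IsScalarTower.algebraMap_apply]

theorem exists_eq_algebraMap_add_algebraMap (y : K̃) :
    ∃ (c : R̂) (k : K), y = algebraMap R̂ K̃ c + algebraMap K K̃ k := by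
  obtain ⟨ϖ, hϖ⟩ := IsDiscreteValuationRing.exists_irreducible R
  obtain ⟨a, s, hs, rfl⟩ := IsFractionRing.div_surjective (A := R̂) y
  obtain ⟨u, n, rfl⟩ := IsLocalRing.exists_eq_unit_mul_pow
    (maximalIdeal_eq_span_of_irreducible hϖ) (nonZeroDivisors.ne_zero hs)
  obtain ⟨r, c, hrc⟩ := exists_eq_algebraMap_add_pow_mul hϖ (↑u⁻¹ * a) n
  refine ⟨c, algebraMap R K r / algebraMap R K (ϖ ^ n), ?_⟩
  have hϖ0 := algebraMap_algebraMap_ne_zero hϖ.ne_zero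
  have ha : a = u * (algebraMap R R̂ r + algebraMap R R̂ ϖ ^ n * c) := by
    rw [← hrc, Units.mul_inv_cancel_left]
  rw [map_div₀, algebraMap_fractionRing_algebraMap, algebraMap_fractionRing_algebraMap, ha]
  simp only [map_mul, map_add, map_pow]
  field_simp
  ring

theorem exists_algebraMap_eq_of_algebraMap_eq {x : R̂} {k : K}
    (h : algebraMap R̂ K̃ x = algebraMap K K̃ k) : ∃ r : R, algebraMap R R̂ r = x := by
  obtain ⟨r, t, ht, rfl⟩ := IsFractionRing.div_surjective (A := R) k
  have ht0 := nonZeroDivisors.ne_zero ht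
  rw [map_div₀, algebraMap_fractionRing_algebraMap, algebraMap_fractionRing_algebraMap,
    eq_div_iff (algebraMap_algebraMap_ne_zero ht0), ← _root_.map_mul] at h
  have hxt := IsFractionRing.injective R̂ K̃ h
  obtain ⟨s, rfl⟩ := algebraMap_dvd_algebraMap_iff.mp (hxt ▸ dvd_mul_left _ _)
  have ht0' : algebraMap R R̂ t ≠ 0 :=
    (map_ne_zero_iff _ algebraMap_injective_of_isDiscreteValuationRing).mpr ht0
  refine ⟨s, mul_left_cancel₀ ht0' ?_⟩
  rw [← _root_.map_mul, ← hxt, mul_comm]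

variable (R) in
noncomputable def toFractionRingQuotient :
    R̂ →ₗ[R] K̃ ⧸ LinearMap.range (IsScalarTower.toAlgHom R K K̃).toLinearMap :=
  (LinearMap.range _).mkQ ∘ₗ (IsScalarTower.toAlgHom R R̂ K̃).toLinearMap

theorem ker_toFractionRingQuotient :
    LinearMap.ker (toFractionRingQuotient R) = LinearMap.range (of (maximalIdeal R) R) := by
  ext x
  simp only [toFractionRingQuotient, LinearMap.mem_ker, LinearMap.comp_apply, Submodule.mkQ_apply,
    Submodule.Quotient.mk_eq_zero, LinearMap.mem_range, AlgHom.toLinearMap_apply,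
    IsScalarTower.coe_toAlgHom']
  constructor
  · rintro ⟨k, hk⟩
    simpa only [algebraMap_apply, Algebra.algebraMap_self, RingHom.id_apply] using
      exists_algebraMap_eq_of_algebraMap_eq hk.symm
  · rintro ⟨r, rfl⟩
    exact ⟨algebraMap R K r, by
      rw [algebraMap_fractionRing_algebraMap, algebraMap_apply, Algebra.algebraMap_self,
        RingHom.id_apply]⟩

theorem toFractionRingQuotient_surjective : Function.Surjective (toFractionRingQuotient R) := by
  intro y
  obtain ⟨y, rfl⟩ := Submodule.Quotient.mk_surjective _ y
  obtain ⟨c, k, rfl⟩ := exists_eq_algebraMap_add_algebraMap y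
  refine ⟨c, (Submodule.Quotient.eq _).mpr ⟨-k, ?_⟩⟩
  simp

end AdicCompletion

/-- Let `R` be a discrete valuation ring that is not complete, with completion `R̂`, fraction
field `K = Q(R)`, and `K̃ = Q(R̂)`.  Then there is an `R`-module isomorphism `R̂/R ≅ K̃/K`.
(The instance hypotheses record the facts that `R̂` is again a domain and that `R → R̂` is
injective; `K → K̃` is the induced map of fraction fields.) -/
theorem stmt_14 (R : Type) [CommRing R] [IsDomain R] [IsDiscreteValuationRing R]
    [IsDomain (AdicCompletion (maximalIdeal R) R)] :
    by letI := FractionRing.liftAlgebra R (FractionRing (AdicCompletion (maximalIdeal R) R))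
       exact Nonempty
        ((AdicCompletion (maximalIdeal R) R ⧸
            LinearMap.range (AdicCompletion.of (maximalIdeal R) R)) ≃ₗ[R]
          (FractionRing (AdicCompletion (maximalIdeal R) R) ⧸
            LinearMap.range
              ((IsScalarTower.toAlgHom R (FractionRing R)
                (FractionRing (AdicCompletion (maximalIdeal R) R))).toLinearMap))) :=
  ⟨(Submodule.quotEquivOfEq _ _ AdicCompletion.ker_toFractionRingQuotient.symm).trans
    (LinearMap.quotKerEquivOfSurjective _ AdicCompletion.toFractionRingQuotient_surjective)⟩
end

section
/- Let R be a non-complete discrete valuation ring with completion R̂, K = Q(R), K̃ = Q(R̂), and suppose K̃ has infinite dimension as a K-vector space, say K̃ ≅ K^(A) with A infinite. Then there is an R-module isomorphism Hom_R(R̂, R̂/R) ≅ (K̃/K)^(B) for some infinite cardinal B > A. -/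
/-!
Let `ϖ` be a uniformizer of `R`. Since `R̂ ⧸ ϖⁿ R̂ = R ⧸ ϖⁿ R` and `R̂` is `ϖ`-adically separated,
every nonzero element of `R̂` is `ϖⁿ` times a unit, so `L = Frac R̂` is `R̂[1/ϖ] = K ⊗_R R̂`.
Moreover `R̂ = R + ϖⁿ R̂` and `R ∩ ϖⁿ R̂ = ϖⁿ R`, which make `R̂ → L → L/K` surjective with kernel
`R`; thus `R̂/R ≅ L/K =: V`, a `K`-vector space. By Hom-tensor adjunction
`Hom_R(R̂, V) ≅ Hom_K(L, V)`, whose `K`-dimension `B` exceeds `dim_K L = A` by the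
Erdős–Kaplansky theorem. Since `0 < dim_K V ≤ A < B`, this space is `V^(B)`.
-/

open IsLocalRing AdicCompletion Cardinal Pointwise

universe u

theorem IsLocalization.of_ge_of_exists_dvd {R S : Type*} [CommRing R] [CommRing S] [Algebra R S]
    {M N : Submonoid R} [IsLocalization N S] (h₁ : M ≤ N) (h₂ : ∀ n ∈ N, ∃ m ∈ M, n ∣ m) :
    IsLocalization M S :=
  have := IsLocalization.of_le_of_exists_dvd M N h₁ h₂ (S := Localization M)
  isLocalization_of_algEquiv M (IsLocalization.algEquiv N (Localization M) S)

noncomputable def quotientRangeAlgebraMapEquiv (R K L : Type*) [CommRing R] [Field K] [Ring L]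
    [Algebra R K] [Algebra K L] [Algebra R L] [IsScalarTower R K L] :
    (L ⧸ LinearMap.range (IsScalarTower.toAlgHom R K L).toLinearMap) ≃ₗ[R]
      L ⧸ LinearMap.range (Algebra.linearMap K L) :=
  (Submodule.quotEquivOfEq _ _ (LinearMap.range_restrictScalars (Algebra.linearMap K L))).trans
    (Submodule.Quotient.restrictScalarsEquiv R _)

noncomputable def IsBaseChange.linearMapEquiv {R S M N : Type*} [CommRing R] [CommRing S]
    [Algebra R S] [AddCommGroup M] [Module R M] [AddCommGroup N] [Module R N] [Module S N]
    [IsScalarTower R S N] {f : M →ₗ[R] N} (hf : IsBaseChange S f) (P : Type*) [AddCommGroup P]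
    [Module R P] [Module S P] [IsScalarTower R S P] : (M →ₗ[R] P) ≃ₗ[S] (N →ₗ[S] P) :=
  (LinearMap.liftBaseChangeEquiv S).trans (hf.equiv.arrowCongr (LinearEquiv.refl S P))

theorem rank_lt_rank_linearMap {K V W : Type u} [Field K] [AddCommGroup V] [Module K V]
    [AddCommGroup W] [Module K W] [Nontrivial W] (hV : ℵ₀ ≤ Module.rank K V) :
    Module.rank K V < Module.rank K (V →ₗ[K] W) := by
  obtain ⟨w, hw⟩ := exists_ne (0 : W)
  have hinj : Function.Injective
      (LinearMap.llcomp K V K W (LinearMap.toSpanSingleton K W w) : Module.Dual K V →ₗ[K] _) :=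
    fun f g hfg ↦ LinearMap.ext fun v ↦ smul_left_injective K hw (LinearMap.congr_fun hfg v)
  exact (rank_lt_rank_dual hV).trans_le (LinearMap.rank_le_of_injective _ hinj)

theorem rank_finsupp_out_of_rank_le {K V : Type u} [Field K] [AddCommGroup V] [Module K V]
    [Nontrivial V] {B : Cardinal} (hB : ℵ₀ ≤ B) (hV : Module.rank K V ≤ B) :
    Module.rank K (B.out →₀ V) = B := by
  rw [rank_finsupp', mk_out, mul_eq_left hB hV (rank_pos (R := K)).ne']

theorem nontrivial_quotient_range_algebraMap {K L : Type u} [Field K] [Ring L] [Algebra K L]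
    (h : ℵ₀ ≤ Module.rank K L) : Nontrivial (L ⧸ LinearMap.range (Algebra.linearMap K L)) := by
  refine Submodule.Quotient.nontrivial_iff.mpr fun htop ↦ ?_
  have := LinearMap.rank_le_of_surjective _ (LinearMap.range_eq_top.mp htop)
  rw [Module.rank_self] at this
  exact (h.trans this).not_gt one_lt_aleph0

namespace AdicCompletion

section PrincipalMaximalIdeal

variable {R : Type*} [CommRing R] [IsLocalRing R] {ϖ : R}

local notation "R̂" => AdicCompletion (maximalIdeal R) R

theorem ker_eval_eq_pow_smul_top (hϖ : maximalIdeal R = Ideal.span {ϖ}) (n : ℕ) :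
    LinearMap.ker (eval (maximalIdeal R) R n) = ϖ ^ n • (⊤ : Submodule R R̂) := by
  rw [← pow_smul_top_eq_ker_eval (hϖ ▸ Submodule.fg_span_singleton ϖ), hϖ,
    Ideal.span_singleton_pow, Submodule.ideal_span_singleton_smul]

theorem eval_eq_zero_iff_exists_pow_smul (hϖ : maximalIdeal R = Ideal.span {ϖ}) (n : ℕ) (x : R̂) :
    eval (maximalIdeal R) R n x = 0 ↔ ∃ y : R̂, x = ϖ ^ n • y := by
  rw [← LinearMap.mem_ker, ker_eval_eq_pow_smul_top hϖ, Submodule.mem_smul_pointwise_iff_exists]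
  simp [eq_comm]

theorem exists_eq_of_add_pow_smul (hϖ : maximalIdeal R = Ideal.span {ϖ}) (n : ℕ) (x : R̂) :
    ∃ (a : R) (y : R̂), x = of _ R a + ϖ ^ n • y := by
  obtain ⟨a, ha⟩ := Submodule.Quotient.mk_surjective _ (eval _ R n x)
  obtain ⟨y, hy⟩ := (eval_eq_zero_iff_exists_pow_smul hϖ n (x - of _ R a)).mp <| by
    rw [map_sub, eval_of, ← ha, Submodule.mkQ_apply, sub_self]
  exact ⟨a, y, by rw [← hy, add_sub_cancel]⟩

theorem pow_dvd_of_of_eq_pow_smul (hϖ : maximalIdeal R = Ideal.span {ϖ}) {n : ℕ} {a : R}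
    {y : R̂} (h : of _ R a = ϖ ^ n • y) : ϖ ^ n ∣ a := by
  have : eval _ R n (of _ R a) = 0 := (eval_eq_zero_iff_exists_pow_smul hϖ n _).mpr ⟨y, h⟩
  rwa [eval_of, Submodule.mkQ_apply, Submodule.Quotient.mk_eq_zero, hϖ, Ideal.span_singleton_pow,
    smul_eq_mul, Ideal.mul_top, Ideal.mem_span_singleton] at this

theorem exists_isUnit_eq_pow_smul [IsNoetherianRing R] (hϖ : maximalIdeal R = Ideal.span {ϖ})
    {x : R̂} (hx : x ≠ 0) : ∃ (n : ℕ) (u : R̂), IsUnit u ∧ x = ϖ ^ n • u := by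
  classical
  have hbounded : ∃ n, ¬∃ y : R̂, x = ϖ ^ n • y := by
    by_contra! h
    exact hx <| AdicCompletion.ext fun n ↦ (eval_eq_zero_iff_exists_pow_smul hϖ n x).mpr (h n)
  obtain ⟨k, hk⟩ : ∃ k, Nat.find hbounded = k + 1 := Nat.exists_eq_succ_of_ne_zero fun h0 ↦
    Nat.find_spec hbounded ⟨x, by rw [h0, pow_zero, one_smul]⟩
  obtain ⟨u, rfl⟩ := not_not.mp <| Nat.find_min hbounded (m := k) (by omega)
  -- by maximality of `k`, `u` is not in `ϖ R̂`, the maximal ideal of `R̂`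
  refine ⟨k, u, notMem_maximalIdeal.mp fun hu ↦ Nat.find_spec hbounded ?_, rfl⟩
  obtain ⟨z, rfl⟩ := (eval_eq_zero_iff_exists_pow_smul hϖ 1 u).mp
    ((mem_maximalIdeal_iff_eval_one_eq_zero u).mp hu)
  exact ⟨z, by rw [hk, smul_smul, ← pow_add]⟩

end PrincipalMaximalIdeal

theorem faithfulSMul_of_isNoetherianRing {R : Type*} [CommRing R] [IsLocalRing R]
    [IsNoetherianRing R] : FaithfulSMul R (AdicCompletion (maximalIdeal R) R) :=
  (faithfulSMul_iff_algebraMap_injective _ _).mpr (of_injective _ R)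

attribute [local instance] faithfulSMul_of_isNoetherianRing

section DiscreteValuationRing

variable {R : Type*} [CommRing R] [IsDomain R] [IsDiscreteValuationRing R]

local notation "R̂" => AdicCompletion (maximalIdeal R) R

theorem exists_eq_of_add_smul {s : R} (hs : s ≠ 0) (x : R̂) :
    ∃ (a : R) (y : R̂), x = of _ R a + s • y := by
  obtain ⟨ϖ, hϖ⟩ := IsDiscreteValuationRing.exists_irreducible R
  obtain ⟨n, u, rfl⟩ := IsDiscreteValuationRing.eq_unit_mul_pow_irreducible hs hϖ
  obtain ⟨a, y, rfl⟩ :=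
    exists_eq_of_add_pow_smul ((IsDiscreteValuationRing.irreducible_iff_uniformizer ϖ).mp hϖ) n x
  exact ⟨a, (↑u⁻¹ : R) • y, by rw [smul_smul, mul_right_comm, Units.mul_inv, one_mul]⟩

theorem mem_range_of_of_smul_mem_range_s15 [IsDomain R̂] {s : R} (hs : s ≠ 0) {x : R̂}
    (h : s • x ∈ LinearMap.range (of _ R)) : x ∈ LinearMap.range (of _ R) := by
  obtain ⟨ϖ, hϖ⟩ := IsDiscreteValuationRing.exists_irreducible R
  obtain ⟨n, u, rfl⟩ := IsDiscreteValuationRing.eq_unit_mul_pow_irreducible hs hϖ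
  obtain ⟨a, ha⟩ := h
  obtain ⟨c, rfl⟩ := pow_dvd_of_of_eq_pow_smul
    ((IsDiscreteValuationRing.irreducible_iff_uniformizer ϖ).mp hϖ) (y := (u : R) • x) <| by
      rw [ha, smul_smul, mul_comm]
  refine ⟨(↑u⁻¹ : R) * c, smul_right_injective R̂ hs ?_⟩
  simp only [← ha, ← map_smul, smul_eq_mul]
  rw [mul_comm (u : R), mul_assoc, Units.mul_inv_cancel_left]

theorem exists_dvd_algebraMap {x : R̂} (hx : x ≠ 0) :
    ∃ s ∈ nonZeroDivisors R, x ∣ algebraMap R R̂ s := by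
  obtain ⟨ϖ, hϖ⟩ := IsDiscreteValuationRing.exists_irreducible R
  obtain ⟨n, u, hu, rfl⟩ := exists_isUnit_eq_pow_smul
    ((IsDiscreteValuationRing.irreducible_iff_uniformizer ϖ).mp hϖ) hx
  refine ⟨ϖ ^ n, mem_nonZeroDivisors_of_ne_zero (pow_ne_zero n hϖ.ne_zero), ?_⟩
  rw [Algebra.smul_def]
  exact hu.mul_right_dvd.mpr dvd_rfl

end DiscreteValuationRing

variable (R : Type*) [CommRing R] [IsDomain R] [IsDiscreteValuationRing R]
  (K L : Type*) [Field K] [Algebra R K] [IsFractionRing R K]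
  [IsDomain (AdicCompletion (maximalIdeal R) R)]
  [Field L] [Algebra (AdicCompletion (maximalIdeal R) R) L]
  [IsFractionRing (AdicCompletion (maximalIdeal R) R) L]

local notation "R̂" => AdicCompletion (maximalIdeal R) R

theorem isLocalization_algebraMapSubmonoid :
    IsLocalization (Algebra.algebraMapSubmonoid R̂ (nonZeroDivisors R)) L :=
  IsLocalization.of_ge_of_exists_dvd
    (algebraMapSubmonoid_le_nonZeroDivisors_of_faithfulSMul R̂ le_rfl)
    fun x hx ↦ by
      obtain ⟨s, hs, hxs⟩ := exists_dvd_algebraMap (nonZeroDivisors.ne_zero hx)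
      exact ⟨_, Algebra.mem_algebraMapSubmonoid_of_mem ⟨s, hs⟩, hxs⟩

variable [Algebra R L] [IsScalarTower R (AdicCompletion (maximalIdeal R) R) L]
  [Algebra K L] [IsScalarTower R K L]

noncomputable def toFractionFieldQuotient :
    R̂ →ₗ[R] L ⧸ LinearMap.range (IsScalarTower.toAlgHom R K L).toLinearMap :=
  (LinearMap.range _).mkQ ∘ₗ (IsScalarTower.toAlgHom R R̂ L).toLinearMap

theorem ker_toFractionFieldQuotient :
    LinearMap.ker (toFractionFieldQuotient R K L) = LinearMap.range (of _ R) := by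
  ext x
  simp only [toFractionFieldQuotient, LinearMap.mem_ker, LinearMap.comp_apply,
    Submodule.mkQ_apply, Submodule.Quotient.mk_eq_zero, LinearMap.mem_range,
    AlgHom.toLinearMap_apply, IsScalarTower.coe_toAlgHom']
  constructor
  · rintro ⟨k, hk⟩
    obtain ⟨⟨a, s⟩, hs⟩ := IsLocalization.surj (nonZeroDivisors R) k
    refine mem_range_of_of_smul_mem_range_s15 (nonZeroDivisors.ne_zero s.2) ⟨a, ?_⟩
    apply IsFractionRing.injective R̂ L
    rw [Algebra.smul_def, map_mul, ← hk, ← IsScalarTower.algebraMap_apply,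
      IsScalarTower.algebraMap_apply R K L, ← map_mul, mul_comm, hs,
      ← IsScalarTower.algebraMap_apply, IsScalarTower.algebraMap_apply R R̂ L]
    rfl
  · rintro ⟨a, rfl⟩
    exact ⟨algebraMap R K a, by
      rw [← IsScalarTower.algebraMap_apply, IsScalarTower.algebraMap_apply R R̂ L]; rfl⟩

theorem toFractionFieldQuotient_surjective :
    Function.Surjective (toFractionFieldQuotient R K L) := by
  have := isLocalization_algebraMapSubmonoid R L
  intro t
  obtain ⟨t, rfl⟩ := Submodule.Quotient.mk_surjective _ t
  obtain ⟨⟨b, s⟩, hbs⟩ := IsLocalizedModule.surj (nonZeroDivisors R)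
    (IsScalarTower.toAlgHom R R̂ L).toLinearMap t
  obtain ⟨a, c, rfl⟩ := exists_eq_of_add_smul (nonZeroDivisors.ne_zero s.2) b
  refine ⟨c, (Submodule.Quotient.eq _).mpr ?_⟩
  set ι := (IsScalarTower.toAlgHom R R̂ L).toLinearMap
  have hs : algebraMap R K s ≠ 0 := IsFractionRing.to_map_ne_zero_of_mem_nonZeroDivisors s.2
  have hsc : algebraMap R K s • (ι c - t) = algebraMap K L (-algebraMap R K a) := by
    rw [algebraMap_smul, smul_sub, ← Submonoid.smul_def s t, hbs, map_add, map_smul,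
      sub_add_cancel_right, map_neg, ← IsScalarTower.algebraMap_apply,
      IsScalarTower.algebraMap_apply R R̂ L]
    rfl
  refine ⟨(algebraMap R K s)⁻¹ * -algebraMap R K a, ?_⟩
  rw [AlgHom.toLinearMap_apply, IsScalarTower.coe_toAlgHom', map_mul, ← Algebra.smul_def, ← hsc,
    inv_smul_smul₀ hs]

noncomputable def quotientRangeOfEquiv :
    (R̂ ⧸ LinearMap.range (of (maximalIdeal R) R)) ≃ₗ[R]
      L ⧸ LinearMap.range (IsScalarTower.toAlgHom R K L).toLinearMap :=
  (Submodule.quotEquivOfEq _ _ (ker_toFractionFieldQuotient R K L).symm).trans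
    ((toFractionFieldQuotient R K L).quotKerEquivOfSurjective
      (toFractionFieldQuotient_surjective R K L))

end AdicCompletion

/-- Let `R` be a non-complete discrete valuation ring with completion `R̂`, `K = Q(R)`,
`K̃ = Q(R̂)`, and suppose `K̃ ≅ K^(A)` as a `K`-vector space with `A` infinite (i.e.
`dim_K K̃ = A`).  Then there is an `R`-module isomorphism
`Hom_R(R̂, R̂/R) ≅ (K̃/K)^(B)` for some infinite cardinal `B > A`. -/
theorem stmt_15 (R : Type) [CommRing R] [IsDomain R] [IsDiscreteValuationRing R]
    [IsDomain (AdicCompletion (maximalIdeal R) R)] :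
    by letI := FractionRing.liftAlgebra R (FractionRing (AdicCompletion (maximalIdeal R) R))
       exact ∀ A : Cardinal, Cardinal.aleph0 ≤ A →
        Module.rank (FractionRing R) (FractionRing (AdicCompletion (maximalIdeal R) R)) = A →
        ∃ B : Cardinal, A < B ∧ Cardinal.aleph0 ≤ B ∧
          Nonempty
            ((AdicCompletion (maximalIdeal R) R →ₗ[R]
                (AdicCompletion (maximalIdeal R) R ⧸
                  LinearMap.range (AdicCompletion.of (maximalIdeal R) R))) ≃ₗ[R]
              (B.out →₀
                (FractionRing (AdicCompletion (maximalIdeal R) R) ⧸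
                  LinearMap.range
                    ((IsScalarTower.toAlgHom R (FractionRing R)
                      (FractionRing (AdicCompletion (maximalIdeal R) R))).toLinearMap)))) := by
  let := FractionRing.liftAlgebra R (FractionRing (AdicCompletion (maximalIdeal R) R))
  intro A hA hrank
  set K := FractionRing R
  set L := FractionRing (AdicCompletion (maximalIdeal R) R)
  let V := L ⧸ LinearMap.range (Algebra.linearMap K L)
  let eV := quotientRangeAlgebraMapEquiv R K L
  have : Nontrivial V := nontrivial_quotient_range_algebraMap (hrank ▸ hA)
  have := AdicCompletion.isLocalization_algebraMapSubmonoid R L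
  let eHom := (IsLocalizedModule.isBaseChange (nonZeroDivisors R) K
    (IsScalarTower.toAlgHom R (AdicCompletion (maximalIdeal R) R) L).toLinearMap).linearMapEquiv V
  set B := Module.rank K (L →ₗ[K] V)
  have hAB : A < B := hrank ▸ rank_lt_rank_linearMap (hrank ▸ hA)
  have hVB : Module.rank K V ≤ B := (rank_quotient_le _).trans (hrank ▸ hAB.le)
  obtain ⟨eB⟩ : Nonempty ((L →ₗ[K] V) ≃ₗ[K] (B.out →₀ V)) :=
    nonempty_linearEquiv_of_rank_eq (rank_finsupp_out_of_rank_le (hA.trans hAB.le) hVB).symm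
  exact ⟨B, hAB, hA.trans hAB.le, ⟨LinearEquiv.congrRight
    ((AdicCompletion.quotientRangeOfEquiv R K L).trans eV) ≪≫ₗ
      (eHom.trans eB).restrictScalars R ≪≫ₗ Finsupp.mapRange.linearEquiv eV.symm⟩⟩
end
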